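/- Let T be a tree and S = (S_A, S_B, S_C) a labeling of T such that (T, S) belongs to the family 𝒯. Then every support vertex of T belongs to S_A and every leaf of T belongs to S_C. -/

import Mathlib

open SimpleGraph

/-- A dominating set: every vertex outside `S` has a neighbor in `S`. -/
def IsDominatingSet {V : Type} (G : SimpleGraph V) (S : Set V) : Prop :=
  ∀ v ∉ S, ∃ u ∈ S, G.Adj u v

/-- A total dominating set: every vertex has a neighbor in `S`. -/
def IsTotalDominatingSet {V : Type} (G : SimpleGraph V) (S : Set V) : Prop :=
  ∀ v : V, ∃ u ∈ S, G.Adj u v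

/-- `u` is within distance two of `v`. -/
def WithinTwo {V : Type} (G : SimpleGraph V) (u v : V) : Prop :=
  G.Adj u v ∨ ∃ w, G.Adj u w ∧ G.Adj w v

/-- A semitotal dominating set: a dominating set in which every vertex is within
distance two of another vertex of the set. -/
def IsSemitotalDominatingSet {V : Type} (G : SimpleGraph V) (S : Set V) : Prop :=
  IsDominatingSet G S ∧ ∀ v ∈ S, ∃ u ∈ S, u ≠ v ∧ WithinTwo G u v

/-- The domination number `γ(G)`. -/
noncomputable def dominationNumber {V : Type} (G : SimpleGraph V) : ℕ :=
  sInf {n | ∃ S : Set V, IsDominatingSet G S ∧ S.ncard = n}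

/-- The total domination number `γ_t(G)`. -/
noncomputable def totalDominationNumber {V : Type} (G : SimpleGraph V) : ℕ :=
  sInf {n | ∃ S : Set V, IsTotalDominatingSet G S ∧ S.ncard = n}

/-- The semitotal domination number `γ_t2(G)`. -/
noncomputable def semitotalDominationNumber {V : Type} (G : SimpleGraph V) : ℕ :=
  sInf {n | ∃ S : Set V, IsSemitotalDominatingSet G S ∧ S.ncard = n}

/-- A leaf: a vertex of degree one. -/
def IsLeaf {V : Type} (G : SimpleGraph V) (v : V) : Prop :=
  (G.neighborSet v).ncard = 1

/-- A support vertex: a vertex adjacent to a leaf. -/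
def IsSupport {V : Type} (G : SimpleGraph V) (v : V) : Prop :=
  ∃ u, G.Adj v u ∧ IsLeaf G u

/-- A star: a graph isomorphic to `K_{1,m}` for some `m ≥ 1`. -/
def IsStar {V : Type} (G : SimpleGraph V) : Prop :=
  ∃ m : ℕ, 1 ≤ m ∧ Nonempty (G ≃g completeBipartiteGraph Unit (Fin m))

/-- The graph obtained from the disjoint union of `G` and `H` by adding
the single edge joining `v : V` to `w : W`. -/
def attach {V W : Type} (G : SimpleGraph V) (H : SimpleGraph W) (v : V) (w : W) :
    SimpleGraph (V ⊕ W) where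
  Adj x y :=
    match x, y with
    | Sum.inl a, Sum.inl b => G.Adj a b
    | Sum.inr a, Sum.inr b => H.Adj a b
    | Sum.inl a, Sum.inr b => a = v ∧ b = w
    | Sum.inr a, Sum.inl b => b = v ∧ a = w
  symm := ⟨by
    rintro (a | a) (b | b) h
    · exact G.adj_symm h
    · exact ⟨h.1, h.2⟩
    · exact ⟨h.1, h.2⟩
    · exact H.adj_symm h⟩
  loopless := ⟨by
    rintro (a | a) h
    · exact G.irrefl h
    · exact H.irrefl h⟩

/-- The statuses used to label the vertices of trees in the family `𝒯`. -/
inductive Label : Type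
  | A | B | C
deriving DecidableEq

/-- The labeling of the path `P₅` assigning `A` to the two support vertices,
`C` to the two leaves and `B` to the center. -/
def pathLabel : Fin 5 → Label
  | 0 => Label.C
  | 1 => Label.A
  | 2 => Label.B
  | 3 => Label.A
  | 4 => Label.C

/-- The family `𝒯` of labeled trees: it contains the labeled path `P₅`, and is closed
under operation `𝒪₁` (attach a new leaf labeled `C` to a vertex labeled `A`), operation
`𝒪₂` (attach a labeled path `P₅` to a degree-one vertex labeled `C`), and under
isomorphism of labeled graphs. -/
inductive TFamily : ∀ {V : Type}, SimpleGraph V → (V → Label) → Prop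
  | base : TFamily (SimpleGraph.pathGraph 5) pathLabel
  | op1 {V : Type} {G : SimpleGraph V} {f : V → Label} (v : V)
      (hv : f v = Label.A) (h : TFamily G f) :
      TFamily (attach G (⊥ : SimpleGraph (Fin 1)) v 0)
        (Sum.elim f (fun _ => Label.C))
  | op2 {V : Type} {G : SimpleGraph V} {f : V → Label} (v : V)
      (hv : f v = Label.C) (hdeg : (G.neighborSet v).ncard = 1) (h : TFamily G f) :
      TFamily (attach G (SimpleGraph.pathGraph 5) v 0) (Sum.elim f pathLabel)
  | iso {V W : Type} {G : SimpleGraph V} {H : SimpleGraph W} {f : V → Label}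
      (e : G ≃g H) (h : TFamily G f) : TFamily H (fun w => f (e.symm w))

/-- The subdivided star with `t` leaves: center `none`, and for each `i : Fin t`
a path `none — some (i,0) — some (i,1)`. -/
def subdividedStar (t : ℕ) : SimpleGraph (Option (Fin t × Fin 2)) :=
  SimpleGraph.fromRel (fun x y =>
    match x, y with
    | none, some p => p.2 = 0
    | some p, some q => p.1 = q.1 ∧ p.2 = 0 ∧ q.2 = 1
    | _, _ => False)

/-- The tree `Y` with three leaves, obtained from the star `K_{1,3}` with center `0`
by subdividing exactly one edge: edges `0-1`, `0-2`, `0-3`, `3-4`.  Its leaves are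
`1`, `2`, `4`; the leaf-neighbors of the center are `1` and `2`. -/
def Ytree : SimpleGraph (Fin 5) :=
  SimpleGraph.fromRel (fun x y =>
    (x = 0 ∧ y = 1) ∨ (x = 0 ∧ y = 2) ∨ (x = 0 ∧ y = 3) ∨ (x = 3 ∧ y = 4))

/-- An almost dominating set of `G` relative to `v`: dominates every vertex except
possibly `v`. -/
def IsAlmostDominatingSet {V : Type} (G : SimpleGraph V) (v : V) (S : Set V) : Prop :=
  ∀ w, w ≠ v → w ∉ S → ∃ u ∈ S, G.Adj u w

/-- The almost domination number `γ(G; v)`. -/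
noncomputable def almostDominationNumber {V : Type} (G : SimpleGraph V) (v : V) : ℕ :=
  sInf {n | ∃ S : Set V, IsAlmostDominatingSet G v S ∧ S.ncard = n}

/-- The family `𝒪` of trees: all trees obtainable from the path `P₄` by a finite
sequence of the operations `𝒪₁`–`𝒪₄` (and taking isomorphic copies). -/
inductive OFamily : ∀ {V : Type}, SimpleGraph V → Prop
  | base : OFamily (SimpleGraph.pathGraph 4)
  | op1 {V : Type} {G : SimpleGraph V} (v : V)
      (hv : ∃ S : Set V, IsSemitotalDominatingSet G S ∧
        S.ncard = semitotalDominationNumber G ∧ v ∈ S)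
      (h : OFamily G) :
      OFamily (attach G (⊥ : SimpleGraph (Fin 1)) v 0)
  | op2short {V : Type} {G : SimpleGraph V} (v : V)
      (hv : almostDominationNumber G v = dominationNumber G) (h : OFamily G) :
      OFamily (attach G (SimpleGraph.pathGraph 2) v 0)
  | op2long {V : Type} {G : SimpleGraph V} (v : V)
      (hv : almostDominationNumber G v = dominationNumber G) (h : OFamily G) :
      OFamily (attach G (SimpleGraph.pathGraph 5) v 0)
  | op3 {V : Type} {G : SimpleGraph V} (v : V) (t : ℕ) (ht : 2 ≤ t) (h : OFamily G) :
      OFamily (attach G (subdividedStar t) v none)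
  | op4 {V : Type} {G : SimpleGraph V} (v : V) (h : OFamily G) :
      OFamily (attach G Ytree v 1)
  | iso {V W : Type} {G : SimpleGraph V} {H : SimpleGraph W}
      (e : G ≃g H) (h : OFamily G) : OFamily H

/-! No tree in `𝒯` has an isolated vertex, so each operation attaches its new piece to an old
vertex `v` that already has a neighbour. Hence `v` stops being a leaf, every other old leaf keeps
its unique neighbour, and the new leaves are the ones the operation labels `C`, next to vertices
it labels `A`: "supports are labelled `A`, leaves `C`" is an invariant of the construction. -/

section Attach

variable {V W : Type} {G : SimpleGraph V} {H : SimpleGraph W} {v : V} {w : W}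

@[simp] lemma attach_adj_inl_inl {a b : V} :
    (attach G H v w).Adj (.inl a) (.inl b) ↔ G.Adj a b := Iff.rfl

@[simp] lemma attach_adj_inl_inr {a : V} {b : W} :
    (attach G H v w).Adj (.inl a) (.inr b) ↔ a = v ∧ b = w := Iff.rfl

@[simp] lemma attach_adj_inr_inl {a : W} {b : V} :
    (attach G H v w).Adj (.inr a) (.inl b) ↔ b = v ∧ a = w := Iff.rfl

@[simp] lemma attach_adj_inr_inr {a b : W} :
    (attach G H v w).Adj (.inr a) (.inr b) ↔ H.Adj a b := Iff.rfl

def attachComm (G : SimpleGraph V) (H : SimpleGraph W) (v : V) (w : W) :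
    attach G H v w ≃g attach H G w v where
  toEquiv := Equiv.sumComm V W
  map_rel_iff' := by
    rintro (a | a) (b | b) <;> simp [and_comm]

lemma attach_neighborSet_inl_of_ne {u : V} (hu : u ≠ v) :
    (attach G H v w).neighborSet (.inl u) = Sum.inl '' G.neighborSet u := by
  ext (x | x) <;> simp [hu]

lemma not_isIsolated_attach (hG : ∀ u, ¬ G.IsIsolated u)
    (hH : ∀ u, u ≠ w → ¬ H.IsIsolated u) :
    ∀ x, ¬ (attach G H v w).IsIsolated x := by
  rintro (u | u)
  · obtain ⟨x, hx⟩ := exists_adj_iff_not_isIsolated.2 (hG u)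
    exact exists_adj_iff_not_isIsolated.1 ⟨.inl x, hx⟩
  · by_cases hu : u = w
    · exact exists_adj_iff_not_isIsolated.1 ⟨.inl v, by simp [hu]⟩
    · obtain ⟨x, hx⟩ := exists_adj_iff_not_isIsolated.2 (hH u hu)
      exact exists_adj_iff_not_isIsolated.1 ⟨.inr x, hx⟩

lemma not_isIsolated_of_iso (e : G ≃g H) (hG : ∀ u, ¬ G.IsIsolated u) (u : W) :
    ¬ H.IsIsolated u := by
  obtain ⟨x, hx⟩ := exists_adj_iff_not_isIsolated.2 (hG (e.symm u))
  exact exists_adj_iff_not_isIsolated.1 ⟨e x, by simpa using e.map_adj_iff.2 hx⟩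

lemma not_isLeaf_of_adj_of_adj {u a b : V} (ha : G.Adj u a) (hb : G.Adj u b) (hab : a ≠ b) :
    ¬ IsLeaf G u := by
  intro h
  obtain ⟨x, hx⟩ := Set.ncard_eq_one.mp h
  have ha' : a ∈ G.neighborSet u := ha
  have hb' : b ∈ G.neighborSet u := hb
  rw [hx] at ha' hb'
  exact hab (ha'.trans hb'.symm)

lemma isLeaf_iso_iff (e : G ≃g H) {u : V} : IsLeaf H (e u) ↔ IsLeaf G u := by
  rw [IsLeaf, IsLeaf, ← Nat.card_coe_set_eq, ← Nat.card_coe_set_eq,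
    Nat.card_congr (e.mapNeighborSet u)]

lemma isLeaf_attach_inl_iff (hv : ¬ G.IsIsolated v) {u : V} :
    IsLeaf (attach G H v w) (.inl u) ↔ u ≠ v ∧ IsLeaf G u := by
  by_cases huv : u = v
  · subst huv
    obtain ⟨x, hx⟩ := exists_adj_iff_not_isIsolated.2 hv
    simpa using not_isLeaf_of_adj_of_adj (G := attach G H u w) (a := .inl x) (b := .inr w)
      (by simpa using hx) (by simp) (by simp)
  · rw [IsLeaf, attach_neighborSet_inl_of_ne huv,
      Set.ncard_image_of_injective _ Sum.inl_injective]
    exact (and_iff_right huv).symm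

lemma isLeaf_attach_inr_iff (hw : ¬ H.IsIsolated w) {u : W} :
    IsLeaf (attach G H v w) (.inr u) ↔ u ≠ w ∧ IsLeaf H u :=
  (isLeaf_iso_iff (attachComm G H v w) (u := .inr u)).symm.trans (isLeaf_attach_inl_iff hw)

end Attach

structure SupportsALeavesC {V : Type} (G : SimpleGraph V) (f : V → Label) : Prop where
  support : ∀ u, IsSupport G u → f u = Label.A
  leaf : ∀ u, IsLeaf G u → f u = Label.C

namespace SupportsALeavesC

variable {V W : Type} {G : SimpleGraph V} {H : SimpleGraph W} {f : V → Label} {g : W → Label}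
  {v : V} {w : W}

lemma iso (hG : SupportsALeavesC G f) (e : G ≃g H) :
    SupportsALeavesC H (fun u => f (e.symm u)) :=
  ⟨fun _ ⟨y, hy, hyl⟩ => hG.support _
      ⟨e.symm y, by simpa using e.symm.map_adj_iff.2 hy, (isLeaf_iso_iff e.symm).2 hyl⟩,
    fun _ hu => hG.leaf _ ((isLeaf_iso_iff e.symm).2 hu)⟩

lemma attach (hG : SupportsALeavesC G f) (hH : SupportsALeavesC H g)
    (hv : ¬ G.IsIsolated v) (hw : ¬ H.IsIsolated w) :
    SupportsALeavesC (_root_.attach G H v w) (Sum.elim f g) := by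
  refine ⟨?_, ?_⟩
  · rintro (u | u) ⟨u' | u', hadj, hleaf⟩
    · exact hG.support u ⟨u', hadj, ((isLeaf_attach_inl_iff hv).1 hleaf).2⟩
    · exact absurd hadj.2 ((isLeaf_attach_inr_iff hw).1 hleaf).1
    · exact absurd hadj.1 ((isLeaf_attach_inl_iff hv).1 hleaf).1
    · exact hH.support u ⟨u', hadj, ((isLeaf_attach_inr_iff hw).1 hleaf).2⟩
  · rintro (u | u) hleaf
    · exact hG.leaf u ((isLeaf_attach_inl_iff hv).1 hleaf).2
    · exact hH.leaf u ((isLeaf_attach_inr_iff hw).1 hleaf).2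

lemma attach_bot (hG : SupportsALeavesC G f) (hv : ¬ G.IsIsolated v) (hfv : f v = Label.A) :
    SupportsALeavesC (_root_.attach G (⊥ : SimpleGraph W) v w) (Sum.elim f fun _ => Label.C) := by
  refine ⟨?_, ?_⟩
  · rintro (u | u) ⟨u' | u', hadj, hleaf⟩
    · exact hG.support u ⟨u', hadj, ((isLeaf_attach_inl_iff hv).1 hleaf).2⟩
    · exact hadj.1 ▸ hfv
    · exact absurd hadj.1 ((isLeaf_attach_inl_iff hv).1 hleaf).1
    · exact hadj.elim
  · rintro (u | u) hleaf
    · exact hG.leaf u ((isLeaf_attach_inl_iff hv).1 hleaf).2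
    · rfl

end SupportsALeavesC

instance (n : ℕ) : DecidableRel (pathGraph n).Adj :=
  fun _ _ => decidable_of_iff _ pathGraph_adj.symm

lemma supportsALeavesC_pathGraph_five : SupportsALeavesC (pathGraph 5) pathLabel := by
  constructor <;> simp only [IsSupport, IsLeaf, Set.ncard_eq_toFinset_card'] <;> decide

lemma not_isIsolated_pathGraph_five (u : Fin 5) : ¬ (pathGraph 5).IsIsolated u :=
  (pathGraph_preconnected 5).not_isIsolated u

namespace TFamily

variable {V : Type} {G : SimpleGraph V} {f : V → Label}

theorem not_isIsolated (h : TFamily G f) : ∀ u, ¬ G.IsIsolated u := by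
  induction h with
  | base => exact not_isIsolated_pathGraph_five
  | op1 _ _ _ ih => exact not_isIsolated_attach ih fun u hu => absurd (Subsingleton.elim u 0) hu
  | op2 _ _ _ _ ih => exact not_isIsolated_attach ih fun u _ => not_isIsolated_pathGraph_five u
  | iso e _ ih => exact not_isIsolated_of_iso e ih

theorem supportsALeavesC (h : TFamily G f) : SupportsALeavesC G f := by
  induction h with
  | base => exact supportsALeavesC_pathGraph_five
  | op1 v hv h ih => exact ih.attach_bot (h.not_isIsolated v) hv
  | op2 v _ _ h ih =>
    exact ih.attach supportsALeavesC_pathGraph_five (h.not_isIsolated v)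
      (not_isIsolated_pathGraph_five 0)
  | iso e _ ih => exact ih.iso e

end TFamily

theorem tFamily_support_label_A_leaf_label_C_general {V : Type} (T : SimpleGraph V)
    (f : V → Label) (h : TFamily T f) :
    (∀ v : V, IsSupport T v → f v = Label.A) ∧
      (∀ v : V, IsLeaf T v → f v = Label.C) :=
  ⟨h.supportsALeavesC.support, h.supportsALeavesC.leaf⟩

/-- If `(T, S) ∈ 𝒯`, then every support vertex of `T` is labeled `A`
and every leaf of `T` is labeled `C`. -/
theorem tFamily_support_label_A_leaf_label_C {V : Type} [Fintype V] (T : SimpleGraph V)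
    (f : V → Label) (hT : T.IsTree) (h : TFamily T f) :
    (∀ v : V, IsSupport T v → f v = Label.A) ∧
      (∀ v : V, IsLeaf T v → f v = Label.C) :=
  tFamily_support_label_A_leaf_label_C_general T f h
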